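/- For distinct nodes i ≠ j, a real parameter α, and a uniformly random spanning converging forest φ, define ω̄_ij(φ,α) = α·ω̂_ij(φ) + (1−α)·ω̃_ij(φ). Then ω̄_ij(φ,α) is unbiased for ω_ij with variance Var(ω̄_ij(·,α)) = (ω_ij(2+d_j)/(1+d_j))·(α − 1/(2+d_j))² + ω_ij/(2+d_j) − ω_ij², which is minimized at α = 1/(2+d_j) with minimum value ω_ij/(2+d_j) − ω_ij². -/

import Mathlib

open Finset

/-- A spanning converging forest of the digraph with edge relation `E`,
encoded by its successor map `f : V → Option V` (`f i = some j` means edge `(i,j)`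
is in the forest, `f i = none` means `i` is a root).  Acyclicity is expressed by a
height function that strictly decreases along edges. -/
def IsSCF {V : Type*} (E : V → V → Prop) (f : V → Option V) : Prop :=
  (∀ i j, f i = some j → E i j) ∧ ∃ h : V → ℕ, ∀ i j, f i = some j → h j < h i

open scoped Classical in
/-- The set `F` of all spanning converging forests of the digraph `E`. -/
noncomputable def forests {V : Type*} [Fintype V] [DecidableEq V]
    (E : V → V → Prop) : Finset (V → Option V) :=
  Finset.univ.filter (IsSCF E)

/-- The root `r_φ(i)` of the tree containing node `i` in the forest `f`:
follow successors until reaching a root. -/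
def rootOf {V : Type*} [Fintype V] (f : V → Option V) (i : V) : V :=
  (fun x => (f x).getD x)^[Fintype.card V] i

/-- The combinatorial forest-matrix entry `ω_{ij} = |F_{ij}| / |F|`. -/
noncomputable def fOmega {V : Type*} [Fintype V] [DecidableEq V]
    (E : V → V → Prop) (i j : V) : ℝ :=
  (((forests E).filter (fun f => rootOf f i = j)).card : ℝ) / ((forests E).card : ℝ)

/-- Expectation of `g` under a uniformly random spanning converging forest. -/
noncomputable def expVal {V : Type*} [Fintype V] [DecidableEq V]
    (E : V → V → Prop) (g : (V → Option V) → ℝ) : ℝ :=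
  (∑ f ∈ forests E, g f) / ((forests E).card : ℝ)

/-- Variance of `g` under a uniformly random spanning converging forest. -/
noncomputable def varVal {V : Type*} [Fintype V] [DecidableEq V]
    (E : V → V → Prop) (g : (V → Option V) → ℝ) : ℝ :=
  expVal E (fun f => (g f - expVal E g) ^ 2)

/-- The indicator estimator `ω̂_{ij}(φ) = 1_{r_φ(i) = j}`. -/
noncomputable def indEst {V : Type*} [Fintype V] [DecidableEq V]
    (i j : V) (f : V → Option V) : ℝ :=
  if rootOf f i = j then 1 else 0

/-- Out-degree `d_i` of node `i`. -/
def outDeg {V : Type*} [Fintype V] (E : V → V → Prop) [DecidableRel E] (i : V) : ℕ :=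
  (Finset.univ.filter (fun j => E i j)).card

/-- In-neighbors `N⁻(j)` of node `j`. -/
def inNbrs {V : Type*} [Fintype V] (E : V → V → Prop) [DecidableRel E] (j : V) : Finset V :=
  Finset.univ.filter (fun k => E k j)

/-- The out-degree Laplacian `L = D - A`. -/
noncomputable def lap {V : Type*} [Fintype V] [DecidableEq V]
    (E : V → V → Prop) [DecidableRel E] : Matrix V V ℝ :=
  Matrix.of fun i j => (if i = j then (outDeg E i : ℝ) else 0) - (if E i j then (1 : ℝ) else 0)

/-- The forest matrix `Ω = (I + L)⁻¹`. -/
noncomputable def forestMatrix {V : Type*} [Fintype V] [DecidableEq V]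
    (E : V → V → Prop) [DecidableRel E] : Matrix V V ℝ :=
  (1 + lap E)⁻¹

/-!
`ω̂_ij` is the indicator of `r(i) = j` and `(1 + d_j) ω̃_ij` that of `r(i) ∈ N⁻(j)`; the two
events are disjoint as `G` has no loops. Mean and variance of `α ω̂ + (1 - α) ω̃` therefore only
involve the probabilities of the two events, and everything follows from the count
`#{φ | r_φ(i) ∈ N⁻(j)} = (1 + d_j) #{φ | r_φ(i) = j}`. For this, hang the root `k` of `i` below
`j` and make `j` a root: `i` is now rooted at `j`, and the old successor of `j` (none, or one of
its `d_j` out-neighbours) is remembered. To invert, cut the edge into `j` on the path from that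
old successor if this path enters the tree of `j`, and on the path from `i` otherwise.
-/

open Function Relation

namespace ConvergingForest

variable {V : Type*}

abbrev Reaches (f : V → Option V) : V → V → Prop :=
  ReflTransGen fun x y => f x = some y

def IsRoot (f : V → Option V) (x r : V) : Prop :=
  Reaches f x r ∧ f r = none

def Terminates (f : V → Option V) : Prop :=
  ∀ x, ∃ r, IsRoot f x r

section Walks

variable {f : V → Option V} {x y j k r s : V}

lemma rightUnique_edge (f : V → Option V) : Relator.RightUnique fun x y => f x = some y :=
  fun _ _ _ h₁ h₂ => Option.some_injective _ (h₁.symm.trans h₂)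

lemma eq_of_reaches_of_eq_none (h : Reaches f r y) (hr : f r = none) : y = r := by
  rcases h.cases_head with rfl | ⟨z, hz, -⟩
  · rfl
  · simp [hr] at hz

lemma IsRoot.unique (h₁ : IsRoot f x r) (h₂ : IsRoot f x s) : r = s := by
  rcases ReflTransGen.total_of_right_unique (rightUnique_edge f) h₁.1 h₂.1 with h | h
  · exact (eq_of_reaches_of_eq_none h h₁.2).symm
  · exact eq_of_reaches_of_eq_none h h₂.2

lemma IsRoot.not_reaches (h : IsRoot f x r) (hy : f y = none) (hyr : y ≠ r) :
    ¬Reaches f x y :=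
  fun hxy => hyr (IsRoot.unique ⟨hxy, hy⟩ h)

lemma IsRoot.of_reaches (h : IsRoot f x r) (hy : Reaches f x y) : IsRoot f y r := by
  refine ⟨?_, h.2⟩
  rcases ReflTransGen.total_of_right_unique (rightUnique_edge f) hy h.1 with h' | h'
  · exact h'
  · rw [eq_of_reaches_of_eq_none h' h.2]

lemma exists_eq_some_of_reaches (h : Reaches f x y) (hxy : x ≠ y) :
    ∃ k, Reaches f x k ∧ f k = some y := by
  rcases h.cases_tail with rfl | hk
  exacts [absurd rfl hxy, hk]

lemma eq_of_reaches_of_eq_some (h₁ : Reaches f x k) (h₂ : Reaches f x r) (hk : f k = some j)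
    (hr : f r = some j) (hj : f j = none) : k = r := by
  have key : ∀ {a b}, Reaches f a b → f a = some j → f b = some j → a = b := by
    intro a b hab ha hb
    rcases hab.cases_head with h | ⟨c, hc, hcb⟩
    · exact h
    · rw [ha, Option.some_inj] at hc
      subst hc
      simp [eq_of_reaches_of_eq_none hcb hj, hj] at hb
  rcases ReflTransGen.total_of_right_unique (rightUnique_edge f) h₁ h₂ with h | h
  exacts [key h hk hr, (key h hr hk).symm]

lemma Terminates.not_reaches_of_eq_some (h : Terminates f) (hxy : f x = some y) :
    ¬Reaches f y x := by
  intro hyx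
  obtain ⟨r, hxr, hr⟩ := h x
  have back : ∀ z, Reaches f x z → Reaches f z x := by
    intro z hz
    induction hz with
    | refl => rfl
    | tail _ hzw ih =>
      rcases ih.cases_head with rfl | ⟨z', hz', hz'x⟩
      · rw [hxy, Option.some_inj] at hzw
        rwa [← hzw]
      · rw [hz', Option.some_inj] at hzw
        rwa [← hzw]
  rw [← eq_of_reaches_of_eq_none (back r hxr) hr] at hr
  simp [hr] at hxy

lemma exists_iterate_eq_of_reaches (h : Reaches f x y) :
    ∃ n, (fun x => (f x).getD x)^[n] x = y := by
  induction h using ReflTransGen.head_induction_on with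
  | refl => exact ⟨0, rfl⟩
  | head hxz _ ih =>
    obtain ⟨n, hn⟩ := ih
    exact ⟨n + 1, by simp only [iterate_succ_apply, hxz, Option.getD_some, hn]⟩

lemma IsRoot.rootOf_eq [Fintype V] (h : IsRoot f x r) : rootOf f x = r := by
  set F : V → V := fun x => (f x).getD x
  have hr : IsFixedPt F r := by simp [F, IsFixedPt, h.2]
  obtain ⟨n, hn⟩ := exists_iterate_eq_of_reaches h.1
  -- the walk repeats within `card V` steps, is periodic from there on, and ends constant at `r`
  obtain ⟨a, b, hab, heq⟩ := Fintype.exists_ne_map_eq_of_card_lt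
    (fun m : Fin (Fintype.card V + 1) => F^[m] x) (by simp)
  wlog hlt : a < b generalizing a b
  · exact this b a hab.symm heq.symm (lt_of_le_of_ne (not_lt.1 hlt) hab.symm)
  have hper : IsPeriodicPt F (b - a) (F^[a] x) := by
    simp only [IsPeriodicPt, IsFixedPt, ← iterate_add_apply, Nat.sub_add_cancel hlt.le]
    exact heq.symm
  have ha : F^[a] x = r := by
    rw [← (hper.mul_const n).eq, ← iterate_add_apply,
      show (b - a : ℕ) * n + a = ((b - a) * n + a - n) + n by
        have : n ≤ (b - a : ℕ) * n := Nat.le_mul_of_pos_left n (by omega)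
        omega,
      iterate_add_apply, hn, hr.iterate]
  rw [rootOf, show Fintype.card V = (Fintype.card V - a) + a by omega, iterate_add_apply, ha,
    hr.iterate]

lemma Terminates.isRoot_rootOf [Fintype V] (h : Terminates f) (x : V) :
    IsRoot f x (rootOf f x) := by
  obtain ⟨r, hr⟩ := h x
  rwa [hr.rootOf_eq]

lemma isSCF_iff [Fintype V] {E : V → V → Prop} :
    IsSCF E f ↔ (∀ x y, f x = some y → E x y) ∧ Terminates f := by
  refine and_congr_right fun _ => ⟨fun ⟨h, hh⟩ => ?_, fun hT => ?_⟩
  · intro x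
    induction hx : h x using Nat.strong_induction_on generalizing x with
    | _ n ih =>
    cases hfx : f x with
    | none => exact ⟨x, .refl, hfx⟩
    | some y =>
      obtain ⟨r, hyr, hr⟩ := ih (h y) (hx ▸ hh x y hfx) y rfl
      exact ⟨r, hyr.head hfx, hr⟩
  · classical
    refine ⟨fun x => #{y | Reaches f x y}, fun x y hxy => Finset.card_lt_card ?_⟩
    rw [Finset.ssubset_iff_of_subset fun z hz => ?_]
    · exact ⟨x, by simpa using ReflTransGen.refl, by simpa using hT.not_reaches_of_eq_some hxy⟩
    · simp only [Finset.mem_filter, Finset.mem_univ, true_and] at hz ⊢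
      exact hz.head hxy

end Walks

section Surgery

variable {V : Type*} [DecidableEq V] {f : V → Option V} {x y j k r s : V}

lemma reaches_update_self (h : Reaches f x k) (v : Option V) : Reaches (update f k v) x k := by
  induction h using ReflTransGen.head_induction_on with
  | refl => rfl
  | @head a c hac _ ih =>
    by_cases hak : a = k
    · rw [hak]
    · exact ih.head (by rwa [update_of_ne hak])

lemma reaches_update_of_not_reaches (h : Reaches f x y) (hk : ¬Reaches f x k) (v : Option V) :
    Reaches (update f k v) x y := by
  induction h using ReflTransGen.head_induction_on with
  | refl => rfl
  | @head a c hac hcy ih =>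
    have hak : a ≠ k := by rintro rfl; exact hk .refl
    exact (ih fun hck => hk (hck.head hac)).head (by rwa [update_of_ne hak])

lemma reaches_update_of_eq_none (h : Reaches f x y) (hk : f k = none) (v : Option V) :
    Reaches (update f k v) x y :=
  ReflTransGen.mono (fun a b (hab : f a = some b) => by
    rwa [update_of_ne (by rintro rfl; simp [hk] at hab)]) _ _ h

lemma reaches_of_reaches_update_none (h : Reaches (update f k none) x y) : Reaches f x y :=
  ReflTransGen.mono (fun a b (hab : update f k none a = some b) => by
    rwa [update_of_ne (by rintro rfl; simp at hab)] at hab) _ _ h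

lemma isRoot_update_none (h : Reaches f x k) : IsRoot (update f k none) x k :=
  ⟨reaches_update_self h none, update_self ..⟩

lemma IsRoot.update_of_not_reaches (h : IsRoot f x r) (hk : ¬Reaches f x k) (v : Option V) :
    IsRoot (update f k v) x r :=
  ⟨reaches_update_of_not_reaches h.1 hk v, by
    rw [update_of_ne fun hrk : r = k => hk (hrk ▸ h.1)]; exact h.2⟩

lemma IsRoot.update_some (hj : IsRoot f j s) (hjk : ¬Reaches f j k) (hx : Reaches f x k) :
    IsRoot (update f k (some j)) x s :=
  have hj' := hj.update_of_not_reaches hjk (some j)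
  ⟨((reaches_update_self hx _).tail (update_self ..)).trans hj'.1, hj'.2⟩

lemma Terminates.update_none (h : Terminates f) (k : V) : Terminates (update f k none) := by
  intro x
  obtain ⟨r, hr⟩ := h x
  by_cases hk : Reaches f x k
  exacts [⟨k, isRoot_update_none hk⟩, ⟨r, hr.update_of_not_reaches hk none⟩]

lemma Terminates.update_some (h : Terminates f) (hjk : ¬Reaches f j k) :
    Terminates (update f k (some j)) := by
  intro x
  obtain ⟨s, hs⟩ := h j
  obtain ⟨r, hr⟩ := h x
  by_cases hk : Reaches f x k
  exacts [⟨s, hs.update_some hjk hk⟩, ⟨r, hr.update_of_not_reaches hk _⟩]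

end Surgery

section Rehang

variable {V : Type*} {E : V → V → Prop} {f g : V → Option V} {i j x : V} {c : Option V}

open Classical in
/-- Undoing `rehang`, when the old successor of `j` was `c`, cuts the edge into `j` on the path
from this vertex. -/
noncomputable def cutSource (g : V → Option V) (i j : V) : Option V → V
  | some c => if Reaches g c j then c else i
  | none => i

lemma exists_reaches_cutSource (hi : Reaches g i j) (hij : i ≠ j) (hc : c ≠ some j) :
    ∃ k, Reaches g (cutSource g i j c) k ∧ g k = some j := by
  cases c with
  | none => exact exists_eq_some_of_reaches hi hij
  | some c =>
    simp only [cutSource]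
    split_ifs with hcj
    · exact exists_eq_some_of_reaches hcj fun h => hc (h ▸ rfl)
    · exact exists_eq_some_of_reaches hi hij

variable [Fintype V]

lemma ne_rootOf_of_adj (hE : ∀ v, ¬E v v) (h : E (rootOf f i) j) : j ≠ rootOf f i :=
  fun hj => hE j (by rwa [← hj] at h)

variable [DecidableEq V]

lemma mem_forests : f ∈ forests E ↔ (∀ x y, f x = some y → E x y) ∧ Terminates f := by
  simp [forests, isSCF_iff]

def rehang (i j : V) (f : V → Option V) : V → Option V :=
  update (update f j none) (rootOf f i) (some j)

lemma rehang_apply_rootOf : rehang i j f (rootOf f i) = some j :=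
  update_self ..

lemma rehang_apply_self (h : j ≠ rootOf f i) : rehang i j f j = none := by
  simp [rehang, h]

lemma rehang_apply_of_ne (hj : x ≠ j) (hk : x ≠ rootOf f i) : rehang i j f x = f x := by
  simp [rehang, hj, hk]

lemma rehang_mem_forests (hE : ∀ v, ¬E v v) (hf : f ∈ forests E) (hfi : E (rootOf f i) j) :
    rehang i j f ∈ forests E ∧ rootOf (rehang i j f) i = j := by
  obtain ⟨hfE, hT⟩ := mem_forests.1 hf
  have hi : IsRoot f i (rootOf f i) := hT.isRoot_rootOf i
  have hjk := ne_rootOf_of_adj hE hfi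
  have hf'k : update f j none (rootOf f i) = none := by rw [update_of_ne hjk.symm]; exact hi.2
  have hj' : IsRoot (update f j none) j j := ⟨.refl, update_self ..⟩
  have hjk' : ¬Reaches (update f j none) j (rootOf f i) := hj'.not_reaches hf'k hjk.symm
  have hroot : IsRoot (rehang i j f) i j := by
    by_cases hij : Reaches f i j
    · have hi' : IsRoot (update f j none) i j := isRoot_update_none hij
      exact hi'.update_of_not_reaches (hi'.not_reaches hf'k hjk.symm) _
    · exact hj'.update_some hjk' (reaches_update_of_not_reaches hi.1 hij none)
  refine ⟨mem_forests.2 ⟨fun x y hxy => ?_, (hT.update_none j).update_some hjk'⟩,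
    hroot.rootOf_eq⟩
  by_cases hxk : x = rootOf f i
  · rw [hxk, rehang_apply_rootOf, Option.some_inj] at hxy
    rwa [hxk, ← hxy]
  · by_cases hxj : x = j
    · rw [hxj, rehang_apply_self hjk] at hxy
      exact absurd hxy nofun
    · exact hfE x y (by rwa [rehang_apply_of_ne hxj hxk] at hxy)

lemma update_update_rehang (hk : f (rootOf f i) = none) (hjk : j ≠ rootOf f i) :
    update (update (rehang i j f) (rootOf f i) none) j (f j) = f := by
  funext x
  by_cases hxj : x = j
  · simp [hxj]
  · by_cases hxk : x = rootOf f i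
    · simp [hxk, hjk.symm, hk]
    · simp [rehang, hxj, hxk]

lemma reaches_cutSource_rehang (hE : ∀ v, ¬E v v) (hf : f ∈ forests E)
    (hfi : E (rootOf f i) j) :
    Reaches (rehang i j f) (cutSource (rehang i j f) i j (f j)) (rootOf f i) := by
  obtain ⟨-, hT⟩ := mem_forests.1 hf
  have hi : IsRoot f i (rootOf f i) := hT.isRoot_rootOf i
  have hjk := ne_rootOf_of_adj hE hfi
  have lift : ∀ {x y}, Reaches f x y → ¬Reaches f x j → Reaches (rehang i j f) x y :=
    fun h hj => reaches_update_of_eq_none (reaches_update_of_not_reaches h hj none)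
      (by rw [update_of_ne hjk.symm]; exact hi.2) _
  cases hc : f j with
  | none => exact lift hi.1 (hi.not_reaches hc hjk)
  | some c =>
    have hcj : ¬Reaches f c j := hT.not_reaches_of_eq_some hc
    simp only [cutSource]
    split_ifs with hcg
    · obtain ⟨hcr, hr⟩ := hT.isRoot_rootOf c
      by_contra hck
      have hrk : rootOf f c ≠ rootOf f i := fun h => hck (h ▸ lift hcr hcj)
      have hrj : rootOf f c ≠ j := by rintro h; simp [h, hc] at hr
      have hgr : rehang i j f (rootOf f c) = none := by rwa [rehang_apply_of_ne hrj hrk]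
      exact hrj (IsRoot.unique ⟨lift hcr hcj, hgr⟩ ⟨hcg, rehang_apply_self hjk⟩)
    · refine lift hi.1 fun hij => hcg ?_
      rcases ReflTransGen.cases_head (hi.of_reaches hij).1 with h | ⟨c', hc', hc'k⟩
      · exact absurd h hjk
      · rw [hc, Option.some_inj] at hc'
        exact (lift (hc' ▸ hc'k) hcj).tail rehang_apply_rootOf

lemma eq_of_rehang_eq (hE : ∀ v, ¬E v v) {f₁ f₂ : V → Option V} (hf₁ : f₁ ∈ forests E)
    (hf₂ : f₂ ∈ forests E) (h₁ : E (rootOf f₁ i) j) (h₂ : E (rootOf f₂ i) j)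
    (hg : rehang i j f₁ = rehang i j f₂) (hc : f₁ j = f₂ j) : f₁ = f₂ := by
  have hk : rootOf f₁ i = rootOf f₂ i := by
    have hp₂ := reaches_cutSource_rehang hE hf₂ h₂
    rw [← hg, ← hc] at hp₂
    exact eq_of_reaches_of_eq_some (reaches_cutSource_rehang hE hf₁ h₁) hp₂
      rehang_apply_rootOf (hg ▸ rehang_apply_rootOf)
      (rehang_apply_self (ne_rootOf_of_adj hE h₁))
  rw [← update_update_rehang ((mem_forests.1 hf₁).2.isRoot_rootOf i).2 (ne_rootOf_of_adj hE h₁),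
    ← update_update_rehang ((mem_forests.1 hf₂).2.isRoot_rootOf i).2 (ne_rootOf_of_adj hE h₂),
    hg, hc, hk]

end Rehang

section Count

variable {V : Type*} [DecidableEq V] {E : V → V → Prop} {g : V → Option V} {i j k : V}
  {c : Option V}

lemma terminates_and_isRoot_cut (hT : Terminates g) (hi : IsRoot g i j) (hk : g k = some j)
    (hx : Reaches g (cutSource g i j c) k) :
    Terminates (update (update g k none) j c) ∧ IsRoot (update (update g k none) j c) i k := by
  have hkj : k ≠ j := by rintro rfl; simp [hi.2] at hk
  have hT' := hT.update_none k
  have hg'j : update g k none j = none := by rw [update_of_ne hkj.symm]; exact hi.2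
  cases c with
  | none =>
    rw [update_eq_self_iff.2 hg'j.symm]
    exact ⟨hT', isRoot_update_none hx⟩
  | some c =>
    simp only [cutSource] at hx
    split_ifs at hx with hcj
    · have hc' : IsRoot (update g k none) c k := isRoot_update_none hx
      have hc'j := hc'.not_reaches hg'j hkj.symm
      refine ⟨hT'.update_some hc'j, ?_⟩
      by_cases hik : Reaches g i k
      · have hi' : IsRoot (update g k none) i k := isRoot_update_none hik
        exact hi'.update_of_not_reaches (hi'.not_reaches hg'j hkj.symm) _
      · exact hc'.update_some hc'j (reaches_update_of_not_reaches hi.1 hik none)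
    · have hi' : IsRoot (update g k none) i k := isRoot_update_none hx
      exact ⟨hT'.update_some fun h => hcj (reaches_of_reaches_update_none h),
        hi'.update_of_not_reaches (hi'.not_reaches hg'j hkj.symm) _⟩

variable [Fintype V]

lemma exists_rehang_eq (hE : ∀ v, ¬E v v) (hij : i ≠ j) (hg : g ∈ forests E)
    (hgi : rootOf g i = j) (hc : ∀ c' ∈ c, E j c') :
    ∃ f ∈ forests E, E (rootOf f i) j ∧ rehang i j f = g ∧ f j = c := by
  obtain ⟨hgE, hT⟩ := mem_forests.1 hg
  have hi : IsRoot g i j := hgi ▸ hT.isRoot_rootOf i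
  obtain ⟨k, hxk, hk⟩ := exists_reaches_cutSource hi.1 hij fun h => hE j (hc j h)
  have hkj : k ≠ j := by rintro rfl; simp [hi.2] at hk
  obtain ⟨hfT, hfi⟩ := terminates_and_isRoot_cut hT hi hk hxk
  have hfk : rootOf (update (update g k none) j c) i = k := hfi.rootOf_eq
  refine ⟨_, mem_forests.2 ⟨fun x y hxy => ?_, hfT⟩, by rw [hfk]; exact hgE k j hk, ?_,
    update_self ..⟩
  · by_cases hxj : x = j
    · subst hxj
      rw [update_self] at hxy
      exact hc y hxy
    · rw [update_of_ne hxj] at hxy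
      by_cases hxk : x = k
      · simp [hxk] at hxy
      · exact hgE x y (by rwa [update_of_ne hxk] at hxy)
  · rw [rehang, hfk]
    funext x
    by_cases hxk : x = k
    · simp [hxk, hk]
    · by_cases hxj : x = j
      · simp [hxj, hkj.symm, hi.2]
      · simp [hxj, hxk]

theorem card_filter_adj_rootOf [DecidableRel E] (hE : ∀ v, ¬E v v) (hij : i ≠ j) :
    #{f ∈ forests E | E (rootOf f i) j} =
      (1 + outDeg E j) * #{f ∈ forests E | rootOf f i = j} := by
  rw [outDeg, add_comm, ← Finset.card_insertNone, mul_comm, ← Finset.card_product]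
  refine Finset.card_bij (fun f _ => (rehang i j f, f j)) ?_ ?_ ?_
  · intro f hf
    obtain ⟨hf, hfi⟩ := Finset.mem_filter.1 hf
    simp only [Finset.mem_product, Finset.mem_filter, Finset.mem_insertNone, Finset.mem_univ,
      true_and]
    exact ⟨rehang_mem_forests hE hf hfi, fun c hc => (mem_forests.1 hf).1 j c hc⟩
  · intro f₁ hf₁ f₂ hf₂ h
    simp only [Finset.mem_filter, Prod.mk.injEq] at hf₁ hf₂ h
    exact eq_of_rehang_eq hE hf₁.1 hf₂.1 hf₁.2 hf₂.2 h.1 h.2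
  · rintro ⟨g, c⟩ h
    simp only [Finset.mem_product, Finset.mem_filter, Finset.mem_insertNone, Finset.mem_univ,
      true_and] at h
    obtain ⟨f, hf, hfi, rfl, rfl⟩ := exists_rehang_eq hE hij h.1.1 h.1.2 h.2
    exact ⟨f, Finset.mem_filter.2 ⟨hf, hfi⟩, rfl⟩

end Count

section Estimators

variable {V : Type*} [Fintype V] [DecidableEq V] {E : V → V → Prop} {i j : V}

lemma forests_nonempty (E : V → V → Prop) : (forests E).Nonempty :=
  ⟨fun _ => none, mem_forests.2 ⟨fun _ _ h => (nomatch h), fun x => ⟨x, .refl, rfl⟩⟩⟩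

lemma expVal_const_mul (a : ℝ) (g : (V → Option V) → ℝ) :
    expVal E (fun f => a * g f) = a * expVal E g := by
  simp only [expVal, ← Finset.mul_sum]
  ring

lemma expVal_mul_add_mul (a b : ℝ) (g h : (V → Option V) → ℝ) :
    expVal E (fun f => a * g f + b * h f) = a * expVal E g + b * expVal E h := by
  simp only [expVal, Finset.sum_add_distrib, ← Finset.mul_sum]
  ring

lemma varVal_eq_expVal_sq_sub (g : (V → Option V) → ℝ) :
    varVal E g = expVal E (fun f => g f ^ 2) - expVal E g ^ 2 := by
  have hN : (#(forests E) : ℝ) ≠ 0 := by exact_mod_cast (forests_nonempty E).card_pos.ne'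
  simp only [varVal, expVal, sub_sq, Finset.sum_add_distrib, Finset.sum_sub_distrib,
    ← Finset.sum_mul, ← Finset.mul_sum, Finset.sum_const, nsmul_eq_mul]
  field_simp
  ring

lemma expVal_boole (p : (V → Option V) → Prop) [DecidablePred p] :
    expVal E (fun f => if p f then 1 else 0) = #{f ∈ forests E | p f} / #(forests E) := by
  rw [expVal, Finset.sum_boole]

lemma expVal_indEst : expVal E (indEst i j) = fOmega E i j :=
  expVal_boole _

lemma sum_inNbrs_indEst [DecidableRel E] (f : V → Option V) :
    ∑ k ∈ inNbrs E j, indEst i k f = if E (rootOf f i) j then 1 else 0 := by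
  simp [indEst, inNbrs]

lemma expVal_sum_inNbrs_indEst [DecidableRel E] (hE : ∀ v, ¬E v v) (hij : i ≠ j) :
    expVal E (fun f => ∑ k ∈ inNbrs E j, indEst i k f) = (1 + outDeg E j) * fOmega E i j := by
  simp only [sum_inNbrs_indEst, expVal_boole, card_filter_adj_rootOf hE hij, fOmega]
  push_cast
  ring

end Estimators

end ConvergingForest

open ConvergingForest

/-- for distinct i ≠ j and α ∈ ℝ, the combined estimator
ω̄_ij(φ,α) = α·ω̂_ij(φ) + (1−α)·ω̃_ij(φ) is unbiased for ω_ij, its variance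
equals (ω_ij(2+d_j)/(1+d_j))·(α − 1/(2+d_j))² + ω_ij/(2+d_j) − ω_ij², and it is
minimized at α = 1/(2+d_j) with minimum value ω_ij/(2+d_j) − ω_ij². -/
theorem combinedEst_unbiased_variance_minimized {V : Type*} [Fintype V] [DecidableEq V]
    (E : V → V → Prop) [DecidableRel E] (hE : ∀ i, ¬ E i i)
    (i j : V) (hij : i ≠ j) :
    (∀ α : ℝ,
      expVal E (fun f => α * indEst i j f +
          (1 - α) * ((1 / (1 + (outDeg E j : ℝ))) * ∑ k ∈ inNbrs E j, indEst i k f))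
        = fOmega E i j) ∧
    (∀ α : ℝ,
      varVal E (fun f => α * indEst i j f +
          (1 - α) * ((1 / (1 + (outDeg E j : ℝ))) * ∑ k ∈ inNbrs E j, indEst i k f))
        = (fOmega E i j * (2 + (outDeg E j : ℝ)) / (1 + (outDeg E j : ℝ))) *
            (α - 1 / (2 + (outDeg E j : ℝ))) ^ 2 +
          fOmega E i j / (2 + (outDeg E j : ℝ)) - (fOmega E i j) ^ 2) ∧
    varVal E (fun f => (1 / (2 + (outDeg E j : ℝ))) * indEst i j f +
          (1 - 1 / (2 + (outDeg E j : ℝ))) *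
            ((1 / (1 + (outDeg E j : ℝ))) * ∑ k ∈ inNbrs E j, indEst i k f))
      = fOmega E i j / (2 + (outDeg E j : ℝ)) - (fOmega E i j) ^ 2 ∧
    (∀ α : ℝ,
      varVal E (fun f => (1 / (2 + (outDeg E j : ℝ))) * indEst i j f +
          (1 - 1 / (2 + (outDeg E j : ℝ))) *
            ((1 / (1 + (outDeg E j : ℝ))) * ∑ k ∈ inNbrs E j, indEst i k f))
        ≤ varVal E (fun f => α * indEst i j f +
          (1 - α) * ((1 / (1 + (outDeg E j : ℝ))) * ∑ k ∈ inNbrs E j, indEst i k f))) := by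
  set d : ℝ := (outDeg E j : ℝ)
  set ω := fOmega E i j
  have hd : 0 < 1 + d := by positivity
  have hd' : 0 < 2 + d := by positivity
  have hω : 0 ≤ ω := by unfold ω fOmega; positivity
  have hhat : expVal E (indEst i j) = ω := expVal_indEst
  have htilde : expVal E (fun f => 1 / (1 + d) * ∑ k ∈ inNbrs E j, indEst i k f) = ω := by
    rw [expVal_const_mul, expVal_sum_inNbrs_indEst hE hij]
    field_simp
    ring
  have hmean (α : ℝ) : expVal E (fun f => α * indEst i j f +
      (1 - α) * (1 / (1 + d) * ∑ k ∈ inNbrs E j, indEst i k f)) = ω := by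
    rw [expVal_mul_add_mul, hhat, htilde]
    ring
  -- `ω̂` and `ω̃` are indicators of disjoint events, `ω̃` scaled by `1 / (1 + d)`
  have hsq (α : ℝ) (f : V → Option V) : (α * indEst i j f +
      (1 - α) * (1 / (1 + d) * ∑ k ∈ inNbrs E j, indEst i k f)) ^ 2 =
      α ^ 2 * indEst i j f + (1 - α) ^ 2 / (1 + d) *
        (1 / (1 + d) * ∑ k ∈ inNbrs E j, indEst i k f) := by
    rw [sum_inNbrs_indEst, indEst]
    split_ifs with h₁ h₂ <;> first | exact absurd (by rwa [h₁] at h₂) (hE j) | ring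
  have hvar (α : ℝ) : varVal E (fun f => α * indEst i j f +
      (1 - α) * (1 / (1 + d) * ∑ k ∈ inNbrs E j, indEst i k f)) =
      ω * (2 + d) / (1 + d) * (α - 1 / (2 + d)) ^ 2 + ω / (2 + d) - ω ^ 2 := by
    rw [varVal_eq_expVal_sq_sub, funext (hsq α), expVal_mul_add_mul, hhat, htilde, hmean]
    field_simp
    ring
  refine ⟨hmean, hvar, by rw [hvar]; simp, fun α => ?_⟩
  rw [hvar, hvar, sub_self]
  have : 0 ≤ ω * (2 + d) / (1 + d) * (α - 1 / (2 + d)) ^ 2 := by positivity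
  linarith
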